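/- arXiv:2507.17505 — 4 statements merged into one kernel-verified Lean document; each statement's English description precedes it below -/
import Mathlib

section
/- Let C be an N×N Hermitian matrix with eigenvalues λ₁ ≤ λ₂ ≤ ⋯ ≤ λ_N and corresponding orthonormal eigenvectors v₁,…,v_N. For an index l, let C̃_l be the (N−1)×(N−1) principal submatrix of C obtained by deleting row l and column l, with eigenvalues α_{l,1} ≤ ⋯ ≤ α_{l,N−1}. Then for every i ∈ {1,…,N}: |v_{i,l}|² · ∏_{n≠i} (λ_i − λ_n) = ∏_{n=1}^{N−1} (λ_i − α_{l,n}). -/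
open Matrix Finset

lemma adjugate_unitary_conj {m : Type*} [Fintype m] [DecidableEq m]
    (U B : Matrix m m ℂ) (hU : U ∈ Matrix.unitaryGroup m ℂ) :
    adjugate (U * B * Uᴴ) = U * adjugate B * Uᴴ := by
  have h1 : Uᴴ * U = 1 := by
    simpa [Matrix.star_eq_conjTranspose] using (Matrix.mem_unitaryGroup_iff'.mp hU)
  have h2 : U * Uᴴ = 1 := by
    simpa [Matrix.star_eq_conjTranspose] using (Matrix.mem_unitaryGroup_iff.mp hU)
  have hadjU : adjugate U = det U • Uᴴ := by
    calc adjugate U = (Uᴴ * U) * adjugate U := by rw [h1, one_mul]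
    _ = Uᴴ * (det U • 1) := by rw [mul_assoc, mul_adjugate]
    _ = det U • Uᴴ := by rw [Matrix.mul_smul, mul_one]
  have hadjUH : adjugate Uᴴ = det Uᴴ • U := by
    calc adjugate Uᴴ = (U * Uᴴ) * adjugate Uᴴ := by rw [h2, one_mul]
    _ = U * (det Uᴴ • 1) := by rw [mul_assoc, mul_adjugate]
    _ = det Uᴴ • U := by rw [Matrix.mul_smul, mul_one]
  have hdet : det Uᴴ * det U = 1 := by
    rw [← det_mul, h1, det_one]
  rw [adjugate_mul_distrib, adjugate_mul_distrib, hadjU, hadjUH]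
  rw [Matrix.smul_mul, Matrix.mul_smul, Matrix.mul_smul, smul_smul, hdet, one_smul, ← mul_assoc]

/-- Eigenvector–eigenvalue identity: for a Hermitian matrix `C` with ordered eigenvalues
`lam` and orthonormal eigenbasis given by the columns of the unitary `V`, and ordered
eigenvalues `alpha` of the principal submatrix deleting row/column `l`, we have
`|v_{i,l}|² ∏_{t≠i} (λ_i − λ_t) = ∏_t (λ_i − α_{l,t})`. -/
theorem eigenvector_eigenvalue_identity
    (n : ℕ) (C : Matrix (Fin (n+1)) (Fin (n+1)) ℂ) (hC : C.IsHermitian)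
    (lam : Fin (n+1) → ℝ) (hlam : Monotone lam)
    (V : Matrix (Fin (n+1)) (Fin (n+1)) ℂ)
    (hV : V ∈ Matrix.unitaryGroup (Fin (n+1)) ℂ)
    (hVeig : C * V = V * Matrix.diagonal (fun i => (lam i : ℂ)))
    (l : Fin (n+1))
    (alpha : Fin n → ℝ) (halpha : Monotone alpha)
    (W : Matrix (Fin n) (Fin n) ℂ)
    (hW : W ∈ Matrix.unitaryGroup (Fin n) ℂ)
    (hWeig : C.submatrix l.succAbove l.succAbove * W
        = W * Matrix.diagonal (fun t => (alpha t : ℂ)))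
    (i : Fin (n+1)) :
    ‖V l i‖ ^ 2 * ∏ t ∈ Finset.univ.erase i, (lam i - lam t)
      = ∏ t : Fin n, (lam i - alpha t) := by
  have hVH : V * Vᴴ = 1 := by
    simpa [Matrix.star_eq_conjTranspose] using (Matrix.mem_unitaryGroup_iff.mp hV)
  have hWH : W * Wᴴ = 1 := by
    simpa [Matrix.star_eq_conjTranspose] using (Matrix.mem_unitaryGroup_iff.mp hW)
  set c : ℂ := (lam i : ℂ)
  set M : Matrix (Fin (n+1)) (Fin (n+1)) ℂ := c • 1 - C with hMdef
  -- C = V D Vᴴ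
  have hCdec : C = V * Matrix.diagonal (fun t => (lam t : ℂ)) * Vᴴ := by
    calc C = C * (V * Vᴴ) := by rw [hVH, mul_one]
    _ = (C * V) * Vᴴ := by rw [mul_assoc]
    _ = _ := by rw [hVeig]
  have hM : M = V * Matrix.diagonal (fun t => c - (lam t : ℂ)) * Vᴴ := by
    have : Matrix.diagonal (fun t : Fin (n+1) => c - (lam t : ℂ))
        = c • 1 - Matrix.diagonal (fun t => (lam t : ℂ)) := by
      rw [Matrix.smul_one_eq_diagonal, Matrix.diagonal_sub]
    rw [this, Matrix.mul_sub, Matrix.sub_mul, ← hCdec]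
    congr 1
    rw [Matrix.mul_smul, mul_one, Matrix.smul_mul, hVH]
  -- adjugate M l l computed via diagonalization
  have hadjM : adjugate M l l
      = V l i * (∏ t ∈ Finset.univ.erase i, (c - (lam t : ℂ))) * star (V l i) := by
    rw [hM, adjugate_unitary_conj _ _ hV, adjugate_diagonal]
    rw [Matrix.mul_apply]
    rw [Finset.sum_eq_single i]
    · rw [Matrix.mul_diagonal, Matrix.conjTranspose_apply]
    · intro k _ hk
      rw [Matrix.mul_diagonal]
      have hz : (∏ j ∈ Finset.univ.erase k, (c - (lam j : ℂ))) = 0 :=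
        Finset.prod_eq_zero (Finset.mem_erase.mpr ⟨hk.symm, Finset.mem_univ i⟩) (by simp [c])
      rw [hz, mul_zero, zero_mul]
    · intro h; exact absurd (Finset.mem_univ i) h
  -- adjugate M l l as determinant of the principal submatrix
  have hCt : C.submatrix l.succAbove l.succAbove
      = W * Matrix.diagonal (fun t => (alpha t : ℂ)) * Wᴴ := by
    calc C.submatrix l.succAbove l.succAbove
        = C.submatrix l.succAbove l.succAbove * (W * Wᴴ) := by rw [hWH, mul_one]
    _ = (C.submatrix l.succAbove l.succAbove * W) * Wᴴ := by rw [mul_assoc]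
    _ = _ := by rw [hWeig]
  have hMsub : M.submatrix l.succAbove l.succAbove
      = W * Matrix.diagonal (fun t => c - (alpha t : ℂ)) * Wᴴ := by
    have h1 : M.submatrix l.succAbove l.succAbove
        = c • 1 - C.submatrix l.succAbove l.succAbove := by
      ext a b
      simp [hMdef, Matrix.submatrix_apply, Matrix.sub_apply, Matrix.smul_apply,
        Matrix.one_apply, (Fin.succAbove_right_injective (p := l)).eq_iff]
    have h2 : Matrix.diagonal (fun t : Fin n => c - (alpha t : ℂ))
        = c • 1 - Matrix.diagonal (fun t => (alpha t : ℂ)) := by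
      rw [Matrix.smul_one_eq_diagonal, Matrix.diagonal_sub]
    rw [h1, h2, Matrix.mul_sub, Matrix.sub_mul, ← hCt]
    congr 1
    rw [Matrix.mul_smul, mul_one, Matrix.smul_mul, hWH]
  have hadjM2 : adjugate M l l = ∏ t : Fin n, (c - (alpha t : ℂ)) := by
    rw [adjugate_fin_succ_eq_det_submatrix M l l, hMsub]
    have hev : ((-1 : ℂ)) ^ ((l : ℕ) + (l : ℕ)) = 1 :=
      Even.neg_one_pow ⟨l, rfl⟩
    rw [hev, one_mul, det_mul, det_mul]
    have : (W.det * (Matrix.diagonal (fun t => c - (alpha t : ℂ))).det) * Wᴴ.det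
        = (W * Wᴴ).det * (Matrix.diagonal (fun t => c - (alpha t : ℂ))).det := by
      rw [det_mul]; ring
    rw [this, hWH, det_one, one_mul, det_diagonal]
  have hmain : V l i * (∏ t ∈ Finset.univ.erase i, (c - (lam t : ℂ))) * star (V l i)
      = ∏ t : Fin n, (c - (alpha t : ℂ)) := hadjM.symm.trans hadjM2
  have hnorm : V l i * star (V l i) = ((‖V l i‖ : ℂ)) ^ 2 := by
    rw [show star (V l i) = (starRingEnd ℂ) (V l i) from rfl, Complex.mul_conj]
    simp [Complex.normSq_eq_norm_sq]
  have key : ((‖V l i‖ : ℂ)) ^ 2 * ∏ t ∈ Finset.univ.erase i, (c - (lam t : ℂ))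
      = ∏ t : Fin n, (c - (alpha t : ℂ)) := by
    rw [← hnorm]
    linear_combination hmain
  apply Complex.ofReal_injective
  push_cast
  exact key
end

section
/- Let C be an N×N Hermitian matrix (N ≥ 2) with eigenvalues λ₁ ≤ ⋯ ≤ λ_N and orthonormal eigenvectors v₁,…,v_N. Let α_{l,1} ≤ ⋯ ≤ α_{l,N−1} be the eigenvalues of the principal submatrix C̃_l obtained by deleting row and column l. Define the SINR drop δ_l := λ_N − α_{l,N−1}. If λ_N is a simple eigenvalue, then δ_l = |v_{N,l}|² (λ_N − λ_{N−1}) · ∏_{t=1}^{N−2} (λ_N − λ_t)/(λ_N − α_{l,t}), provided λ_N ≠ α_{l,t} for all t ≤ N−2. -/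
open Matrix Finset

private lemma adj_unitary {m : ℕ} (V : Matrix (Fin m) (Fin m) ℂ)
    (hV : V ∈ Matrix.unitaryGroup (Fin m) ℂ) :
    Matrix.adjugate V = V.det • star V := by
  have h2 : star V * V = 1 := Matrix.mem_unitaryGroup_iff'.mp hV
  calc Matrix.adjugate V = (star V * V) * Matrix.adjugate V := by rw [h2, Matrix.one_mul]
  _ = star V * (V.det • 1) := by rw [Matrix.mul_assoc, Matrix.mul_adjugate]
  _ = V.det • star V := by rw [Matrix.mul_smul, Matrix.mul_one]

private lemma shift_decomp {m : ℕ} (C : Matrix (Fin m) (Fin m) ℂ) (mu : Fin m → ℝ)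
    (V : Matrix (Fin m) (Fin m) ℂ) (hV : V ∈ Matrix.unitaryGroup (Fin m) ℂ)
    (hVeig : C * V = V * Matrix.diagonal (fun i => (mu i : ℂ))) (x : ℂ) :
    x • (1 : Matrix (Fin m) (Fin m) ℂ) - C
      = V * Matrix.diagonal (fun i => x - (mu i : ℂ)) * star V := by
  have h1 : V * star V = 1 := Matrix.mem_unitaryGroup_iff.mp hV
  have hC : C = V * Matrix.diagonal (fun i => (mu i : ℂ)) * star V := by
    rw [← hVeig, Matrix.mul_assoc, h1, Matrix.mul_one]
  have hdiag : Matrix.diagonal (fun i => x - (mu i : ℂ))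
      = x • (1 : Matrix (Fin m) (Fin m) ℂ) - Matrix.diagonal (fun i => (mu i : ℂ)) := by
    ext i j
    rcases eq_or_ne i j with rfl | h
    · simp
    · simp [Matrix.diagonal_apply_ne _ h, Matrix.one_apply_ne h]
  rw [hdiag, Matrix.mul_sub, Matrix.sub_mul, ← hC, Matrix.mul_smul, Matrix.smul_mul,
    Matrix.mul_one, h1]

private lemma det_shift {m : ℕ} (C : Matrix (Fin m) (Fin m) ℂ) (mu : Fin m → ℝ)
    (V : Matrix (Fin m) (Fin m) ℂ) (hV : V ∈ Matrix.unitaryGroup (Fin m) ℂ)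
    (hVeig : C * V = V * Matrix.diagonal (fun i => (mu i : ℂ))) (x : ℂ) :
    (x • (1 : Matrix (Fin m) (Fin m) ℂ) - C).det = ∏ i, (x - (mu i : ℂ)) := by
  have h1 : V * star V = 1 := Matrix.mem_unitaryGroup_iff.mp hV
  have hd : V.det * (star V).det = 1 := by rw [← Matrix.det_mul, h1, Matrix.det_one]
  rw [shift_decomp C mu V hV hVeig x, Matrix.det_mul, Matrix.det_mul, Matrix.det_diagonal]
  ring_nf
  rw [mul_comm, ← mul_assoc, mul_comm (star V).det, hd, one_mul]

private lemma adj_shift {m : ℕ} (C : Matrix (Fin m) (Fin m) ℂ) (mu : Fin m → ℝ)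
    (V : Matrix (Fin m) (Fin m) ℂ) (hV : V ∈ Matrix.unitaryGroup (Fin m) ℂ)
    (hVeig : C * V = V * Matrix.diagonal (fun i => (mu i : ℂ))) (x : ℂ) :
    Matrix.adjugate (x • (1 : Matrix (Fin m) (Fin m) ℂ) - C)
      = V * Matrix.diagonal (fun i => ∏ k ∈ Finset.univ.erase i, (x - (mu k : ℂ))) * star V := by
  have h2 : star V * V = 1 := Matrix.mem_unitaryGroup_iff'.mp hV
  have hd : (star V).det * V.det = 1 := by rw [← Matrix.det_mul, h2, Matrix.det_one]
  have hsV : star V ∈ Matrix.unitaryGroup (Fin m) ℂ := Unitary.star_mem hV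
  rw [shift_decomp C mu V hV hVeig x, Matrix.adjugate_mul_distrib,
    Matrix.adjugate_mul_distrib, adj_unitary V hV, adj_unitary (star V) hsV,
    Matrix.adjugate_diagonal, star_star]
  simp only [Matrix.smul_mul, Matrix.mul_smul, smul_smul, Matrix.mul_assoc]
  rw [mul_comm, hd, one_smul]

private lemma prod_erase_last {M : Type*} [CommMonoid M] (m : ℕ) (f : Fin (m+1) → M) :
    ∏ k ∈ Finset.univ.erase (Fin.last m), f k = ∏ k : Fin m, f k.castSucc := by
  have himg : Finset.univ.erase (Fin.last m) = Finset.univ.image Fin.castSucc := by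
    ext k
    simp only [Finset.mem_erase, Finset.mem_univ, and_true, Finset.mem_image, true_and]
    constructor
    · intro h
      obtain ⟨j, hj⟩ := Fin.exists_castSucc_eq.mpr h
      exact ⟨j, hj⟩
    · rintro ⟨j, rfl⟩
      exact (Fin.castSucc_lt_last j).ne
  rw [himg, Finset.prod_image (fun a _ b _ h => Fin.castSucc_injective _ h)]
/-- Lemma 1 of the paper: the SINR drop `δ_l = λ_N − α_{l,N−1}` due to deleting
row/column `l` of a Hermitian matrix with simple top eigenvalue satisfies
`δ_l = |v_{N,l}|² (λ_N − λ_{N−1}) ∏_{t=1}^{N−2} (λ_N − λ_t)/(λ_N − α_{l,t})`. -/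
theorem sinr_drop_formula
    (n : ℕ) (C : Matrix (Fin (n+2)) (Fin (n+2)) ℂ) (hC : C.IsHermitian)
    (lam : Fin (n+2) → ℝ) (hlam : Monotone lam)
    (V : Matrix (Fin (n+2)) (Fin (n+2)) ℂ)
    (hV : V ∈ Matrix.unitaryGroup (Fin (n+2)) ℂ)
    (hVeig : C * V = V * Matrix.diagonal (fun i => (lam i : ℂ)))
    (l : Fin (n+2))
    (alpha : Fin (n+1) → ℝ) (halpha : Monotone alpha)
    (W : Matrix (Fin (n+1)) (Fin (n+1)) ℂ)
    (hW : W ∈ Matrix.unitaryGroup (Fin (n+1)) ℂ)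
    (hWeig : C.submatrix l.succAbove l.succAbove * W
        = W * Matrix.diagonal (fun t => (alpha t : ℂ)))
    (hsimple : lam ((Fin.last n).castSucc) < lam (Fin.last (n+1)))
    (hne : ∀ t : Fin n, lam (Fin.last (n+1)) ≠ alpha t.castSucc) :
    lam (Fin.last (n+1)) - alpha (Fin.last n)
      = ‖V l (Fin.last (n+1))‖ ^ 2
          * (lam (Fin.last (n+1)) - lam ((Fin.last n).castSucc))
          * ∏ t : Fin n,
              (lam (Fin.last (n+1)) - lam t.castSucc.castSucc)
                / (lam (Fin.last (n+1)) - alpha t.castSucc) := by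
  set N : Fin (n+2) := Fin.last (n+1) with hN
  set L : ℝ := lam N with hL
  set M : Matrix (Fin (n+2)) (Fin (n+2)) ℂ := (L : ℂ) • 1 - C with hM
  have hsub : M.submatrix l.succAbove l.succAbove
      = (L : ℂ) • 1 - C.submatrix l.succAbove l.succAbove := by
    ext i j
    simp [hM, Matrix.submatrix_apply, Matrix.sub_apply, Matrix.smul_apply, Matrix.one_apply,
      (Fin.succAbove_right_injective (p := l)).eq_iff]
  have h1 : Matrix.adjugate M l l = ∏ t : Fin (n+1), ((L : ℂ) - alpha t) := by
    rw [Matrix.adjugate_fin_succ_eq_det_submatrix, hsub,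
      det_shift _ alpha W hW hWeig]
    rw [← two_mul, pow_mul]
    norm_num
  have h2 : Matrix.adjugate M l l
      = V l N * star (V l N) * ∏ k ∈ Finset.univ.erase N, ((L : ℂ) - lam k) := by
    rw [hM, adj_shift C lam V hV hVeig, Matrix.mul_apply]
    rw [Fintype.sum_eq_single N ?_]
    · rw [Matrix.mul_diagonal, Matrix.star_apply]
      ring
    · intro i hi
      rw [Matrix.mul_diagonal]
      have hz : (∏ k ∈ Finset.univ.erase i, ((L : ℂ) - lam k)) = 0 := by
        refine Finset.prod_eq_zero (Finset.mem_erase.mpr ⟨(Ne.symm hi), Finset.mem_univ N⟩) ?_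
        simp [hL]
      simp [hz]
  have hkey : ∏ t : Fin (n+1), ((L : ℂ) - alpha t)
      = V l N * star (V l N) * ∏ k ∈ Finset.univ.erase N, ((L : ℂ) - lam k) := by
    rw [← h1, h2]
  rw [prod_erase_last (n+1) (fun k => (L : ℂ) - lam k)] at hkey
  rw [Fin.prod_univ_castSucc (f := fun t : Fin (n+1) => (L : ℂ) - alpha t),
    Fin.prod_univ_castSucc (f := fun k : Fin (n+1) => (L : ℂ) - lam k.castSucc)] at hkey
  have hvc : V l N * star (V l N) = ((‖V l N‖ ^ 2 : ℝ) : ℂ) := by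
    rw [RCLike.star_def, Complex.mul_conj]
    norm_cast
    rw [Complex.normSq_eq_norm_sq]
  rw [hvc] at hkey
  have hkeyR : (∏ t : Fin n, (L - alpha t.castSucc)) * (L - alpha (Fin.last n))
      = ‖V l N‖ ^ 2 * ((∏ t : Fin n, (L - lam t.castSucc.castSucc)) * (L - lam ((Fin.last n).castSucc))) := by
    apply Complex.ofReal_injective
    push_cast at hkey ⊢
    linear_combination hkey
  have hQ : (∏ t : Fin n, (L - alpha t.castSucc)) ≠ 0 :=
    Finset.prod_ne_zero_iff.mpr fun t _ => sub_ne_zero.mpr (hne t)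
  rw [Finset.prod_div_distrib]
  rw [mul_div_assoc', eq_div_iff hQ]
  linear_combination hkeyR
end

section
/- Let C be an N×N Hermitian matrix (N ≥ 2) with eigenvalues λ₁ ≤ ⋯ ≤ λ_N, λ_N simple, top orthonormal eigenvector v_N, and let α_{l,N−1} be the largest eigenvalue of the principal submatrix deleting row and column l. Then λ_N − α_{l,N−1} ≥ |v_{N,l}|² (λ_N − λ_{N−1}). -/
open Matrix

/-- Lower bound on the SINR drop: `λ_N − α_{l,N−1} ≥ |v_{N,l}|² (λ_N − λ_{N−1})`. -/
theorem sinr_drop_lower_bound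
    (n : ℕ) (C : Matrix (Fin (n+2)) (Fin (n+2)) ℂ) (hC : C.IsHermitian)
    (lam : Fin (n+2) → ℝ) (hlam : Monotone lam)
    (V : Matrix (Fin (n+2)) (Fin (n+2)) ℂ)
    (hV : V ∈ Matrix.unitaryGroup (Fin (n+2)) ℂ)
    (hVeig : C * V = V * Matrix.diagonal (fun i => (lam i : ℂ)))
    (l : Fin (n+2))
    (alpha : Fin (n+1) → ℝ) (halpha : Monotone alpha)
    (W : Matrix (Fin (n+1)) (Fin (n+1)) ℂ)
    (hW : W ∈ Matrix.unitaryGroup (Fin (n+1)) ℂ)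
    (hWeig : C.submatrix l.succAbove l.succAbove * W
        = W * Matrix.diagonal (fun t => (alpha t : ℂ)))
    (hsimple : lam ((Fin.last n).castSucc) < lam (Fin.last (n+1))) :
    ‖V l (Fin.last (n+1))‖ ^ 2 * (lam (Fin.last (n+1)) - lam ((Fin.last n).castSucc))
      ≤ lam (Fin.last (n+1)) - alpha (Fin.last n) := by
  classical
  set L : Fin (n+2) := Fin.last (n+1) with hL
  set D : Matrix (Fin (n+2)) (Fin (n+2)) ℂ := Matrix.diagonal (fun i => (lam i : ℂ)) with hD
  -- unitarity
  have hV1 : Vᴴ * V = 1 := by rw [← Matrix.star_eq_conjTranspose]; exact hV.1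
  have hV2 : V * Vᴴ = 1 := by rw [← Matrix.star_eq_conjTranspose]; exact hV.2
  have hW1 : Wᴴ * W = 1 := by rw [← Matrix.star_eq_conjTranspose]; exact hW.1
  -- the top eigenvector of the submatrix
  set w : Fin (n+1) → ℂ := fun t => W t (Fin.last n) with hw
  set u : Fin (n+2) → ℂ := l.insertNth 0 w with hu
  set c : Fin (n+2) → ℂ := Vᴴ *ᵥ u with hc
  have hu_s : ∀ t, u (l.succAbove t) = w t := by
    intro t; simp [hu]
  have hu_l : u l = 0 := by simp [hu]
  -- norms
  have hwnorm : ∑ t, (starRingEnd ℂ) (w t) * w t = 1 := by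
    have := congrFun (congrFun hW1 (Fin.last n)) (Fin.last n)
    simpa [Matrix.mul_apply, Matrix.conjTranspose_apply, Matrix.one_apply, hw,
      Complex.star_def] using this
  have hVcol : ∑ j, (starRingEnd ℂ) (V j L) * V j L = 1 := by
    have := congrFun (congrFun hV1 L) L
    simpa [Matrix.mul_apply, Matrix.conjTranspose_apply, Matrix.one_apply,
      Complex.star_def] using this
  have hunorm : star u ⬝ᵥ u = 1 := by
    simp only [dotProduct, Pi.star_apply, Complex.star_def]
    rw [Fin.sum_univ_succAbove (fun i => (starRingEnd ℂ) (u i) * u i) l]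
    simp [hu_l, hu_s, hwnorm]
  -- eigen-equation for the submatrix column
  have hBw : ∀ s, (∑ t, C (l.succAbove s) (l.succAbove t) * w t)
      = (alpha (Fin.last n) : ℂ) * w s := by
    intro s
    have := congrFun (congrFun hWeig s) (Fin.last n)
    rw [Matrix.mul_diagonal] at this
    simp only [Matrix.mul_apply, Matrix.submatrix_apply] at this
    simp only [hw]
    rw [this, mul_comm]
  -- quadratic form of C on u equals alpha
  have hquad : star u ⬝ᵥ (C *ᵥ u) = (alpha (Fin.last n) : ℂ) := by
    have hCu : ∀ s, (C *ᵥ u) (l.succAbove s) = (alpha (Fin.last n) : ℂ) * w s := by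
      intro s
      simp only [Matrix.mulVec, dotProduct]
      rw [Fin.sum_univ_succAbove (fun j => C (l.succAbove s) j * u j) l]
      simp only [hu_l, mul_zero, zero_add]
      simp only [hu_s]
      exact hBw s
    simp only [dotProduct, Pi.star_apply, Complex.star_def]
    rw [Fin.sum_univ_succAbove (fun i => (starRingEnd ℂ) (u i) * (C *ᵥ u) i) l]
    simp only [hu_l, map_zero, zero_mul, zero_add, hu_s, hCu]
    calc ∑ s, (starRingEnd ℂ) (w s) * ((alpha (Fin.last n) : ℂ) * w s)
        = (alpha (Fin.last n) : ℂ) * ∑ s, (starRingEnd ℂ) (w s) * w s := by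
          rw [Finset.mul_sum]; congr 1; ext s; ring
      _ = (alpha (Fin.last n) : ℂ) := by rw [hwnorm, mul_one]
  -- key diagonalization
  have hkeyC : V * (D * Vᴴ) = C := by
    rw [← Matrix.mul_assoc, ← hVeig, Matrix.mul_assoc, hV2, Matrix.mul_one]
  have hstarc : star c = star u ᵥ* V := by
    rw [hc, Matrix.star_mulVec, Matrix.conjTranspose_conjTranspose]
  -- sum of |c|^2 equals 1
  have hcnorm : star c ⬝ᵥ c = 1 := by
    rw [hstarc, hc, ← Matrix.dotProduct_mulVec, Matrix.mulVec_mulVec, hV2,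
      Matrix.one_mulVec, hunorm]
  -- sum of lam |c|^2 equals alpha
  have hcquad : star c ⬝ᵥ (D *ᵥ c) = (alpha (Fin.last n) : ℂ) := by
    rw [hstarc, hc, Matrix.mulVec_mulVec, ← Matrix.dotProduct_mulVec,
      Matrix.mulVec_mulVec, hkeyC, hquad]
  -- real versions
  have hstar_sq : ∀ z : ℂ, star z * z = ((‖z‖^2 : ℝ) : ℂ) := by
    intro z
    rw [Complex.star_def, mul_comm, Complex.mul_conj, Complex.normSq_eq_norm_sq]
  have hp1 : ∑ i, ‖c i‖^2 = 1 := by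
    have h := hcnorm
    simp only [dotProduct, Pi.star_apply, hstar_sq] at h
    exact_mod_cast h
  have hp2 : ∑ i, lam i * ‖c i‖^2 = alpha (Fin.last n) := by
    have h := hcquad
    simp only [dotProduct, Pi.star_apply, hD, Matrix.mulVec_diagonal] at h
    have h2 : ∀ i : Fin (n+2), star (c i) * ((lam i : ℂ) * c i)
        = ((lam i * ‖c i‖^2 : ℝ) : ℂ) := by
      intro i
      have : star (c i) * ((lam i : ℂ) * c i) = (lam i : ℂ) * (star (c i) * c i) := by ring
      rw [this, hstar_sq]
      push_cast
      ring
    simp only [h2] at h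
    exact_mod_cast h
  -- the top coefficient
  have hcL : c L = ∑ t, (starRingEnd ℂ) (V (l.succAbove t) L) * w t := by
    rw [hc]
    simp only [Matrix.mulVec, dotProduct, Matrix.conjTranspose_apply]
    rw [Fin.sum_univ_succAbove (fun j => star (V j L) * u j) l]
    simp [hu_l, hu_s, Complex.star_def]
  have hVsum : ∑ t, ‖V (l.succAbove t) L‖^2 = 1 - ‖V l L‖^2 := by
    have h : ∑ j, ‖V j L‖^2 = 1 := by
      have h := hVcol
      simp only [← Complex.star_def, hstar_sq] at h
      exact_mod_cast h
    rw [Fin.sum_univ_succAbove (fun j => ‖V j L‖^2) l] at h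
    linarith
  have hwn : ∑ t, ‖w t‖^2 = 1 := by
    have h := hwnorm
    simp only [← Complex.star_def, hstar_sq] at h
    exact_mod_cast h
  have hcLbound : ‖c L‖^2 ≤ 1 - ‖V l L‖^2 := by
    have h1 : ‖c L‖ ≤ ∑ t, ‖V (l.succAbove t) L‖ * ‖w t‖ := by
      rw [hcL]
      refine (norm_sum_le _ _).trans (le_of_eq ?_)
      refine Finset.sum_congr rfl fun t _ => ?_
      simp [norm_mul]
    have h2 : (∑ t, ‖V (l.succAbove t) L‖ * ‖w t‖)^2
        ≤ (∑ t, ‖V (l.succAbove t) L‖^2) * (∑ t, ‖w t‖^2) :=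
      Finset.sum_mul_sq_le_sq_mul_sq _ _ _
    calc ‖c L‖^2 ≤ (∑ t, ‖V (l.succAbove t) L‖ * ‖w t‖)^2 :=
          pow_le_pow_left₀ (norm_nonneg _) h1 2
      _ ≤ (∑ t, ‖V (l.succAbove t) L‖^2) * (∑ t, ‖w t‖^2) := h2
      _ = 1 - ‖V l L‖^2 := by rw [hVsum, hwn, mul_one]
  -- final arithmetic
  have hgap : 0 ≤ lam L - lam ((Fin.last n).castSucc) := by linarith
  have hsum_eq : lam L - alpha (Fin.last n) = ∑ i, (lam L - lam i) * ‖c i‖^2 := by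
    have h : ∑ i, (lam L - lam i) * ‖c i‖^2
        = lam L * (∑ i, ‖c i‖^2) - ∑ i, lam i * ‖c i‖^2 := by
      rw [Finset.mul_sum, ← Finset.sum_sub_distrib]
      refine Finset.sum_congr rfl fun i _ => by ring
    rw [h, hp1, hp2, mul_one]
  have hsplit : ∑ i, (lam L - lam i) * ‖c i‖^2
      = ∑ i ∈ Finset.univ.erase L, (lam L - lam i) * ‖c i‖^2 := by
    rw [← Finset.add_sum_erase Finset.univ _ (Finset.mem_univ L)]
    simp
  have herase_p : ∑ i ∈ Finset.univ.erase L, ‖c i‖^2 = 1 - ‖c L‖^2 := by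
    have h : ‖c L‖^2 + ∑ i ∈ Finset.univ.erase L, ‖c i‖^2 = 1 := by
      rw [← hp1]
      exact Finset.add_sum_erase _ (fun i => ‖c i‖^2) (Finset.mem_univ L)
    linarith
  have hterm : ∀ i ∈ Finset.univ.erase L,
      (lam L - lam ((Fin.last n).castSucc)) * ‖c i‖^2
        ≤ (lam L - lam i) * ‖c i‖^2 := by
    intro i hi
    have hiL : i ≠ L := Finset.ne_of_mem_erase hi
    have hle : lam i ≤ lam ((Fin.last n).castSucc) := by
      refine hlam ?_
      have h1 : (i : ℕ) < n + 2 := i.isLt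
      have h2 : (i : ℕ) ≠ n + 1 := by
        intro h
        exact hiL (Fin.ext (by simp [hL, Fin.val_last, h]))
      simp only [Fin.le_def, Fin.coe_castSucc, Fin.val_last]
      omega
    exact mul_le_mul_of_nonneg_right (by linarith) (sq_nonneg _)
  calc ‖V l L‖^2 * (lam L - lam ((Fin.last n).castSucc))
      = (lam L - lam ((Fin.last n).castSucc)) * ‖V l L‖^2 := mul_comm _ _
    _ ≤ (lam L - lam ((Fin.last n).castSucc)) * (1 - ‖c L‖^2) :=
        mul_le_mul_of_nonneg_left (by linarith) hgap
    _ = ∑ i ∈ Finset.univ.erase L,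
          (lam L - lam ((Fin.last n).castSucc)) * ‖c i‖^2 := by
        rw [← herase_p, Finset.mul_sum]
    _ ≤ ∑ i ∈ Finset.univ.erase L, (lam L - lam i) * ‖c i‖^2 :=
        Finset.sum_le_sum hterm
    _ = lam L - alpha (Fin.last n) := by rw [← hsplit, ← hsum_eq]
end

section
/- In the rank-one setting A = u uᴴ, B Hermitian positive definite, with u_{(l)} and B_{(l)} denoting the deletions of coordinate l, the SINR drop satisfies δ_l = uᴴB^{−1}u − u_{(l)}ᴴ B_{(l)}^{−1} u_{(l)} = |(B^{−1}u)_l|² / (B^{−1})_{ll}. -/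
open Matrix ComplexOrder

/-- Closed form for the rank-one SINR drop:
`δ_l = uᴴB⁻¹u − u_{(l)}ᴴ B_{(l)}⁻¹ u_{(l)} = |(B⁻¹u)_l|² / (B⁻¹)_{ll}`. -/
theorem rank_one_sinr_drop_closed_form
    (n : ℕ) (u : Fin (n+1) → ℂ)
    (B : Matrix (Fin (n+1)) (Fin (n+1)) ℂ) (hB : B.PosDef) (l : Fin (n+1)) :
    star u ⬝ᵥ (B⁻¹ *ᵥ u)
        - star (u ∘ l.succAbove)
            ⬝ᵥ ((B.submatrix l.succAbove l.succAbove)⁻¹ *ᵥ (u ∘ l.succAbove))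
      = ((‖(B⁻¹ *ᵥ u) l‖ ^ 2 : ℝ) : ℂ) / (B⁻¹ l l) := by
  set σ := l.succAbove with hσ
  set M := B⁻¹ with hMdef
  set v := B⁻¹ *ᵥ u with hvdef
  set C := B.submatrix σ σ with hCdef
  have hMpd : M.PosDef := hB.inv
  have hBd : IsUnit B.det := (Matrix.isUnit_iff_isUnit_det _).1 hB.isUnit
  -- C is positive definite
  have key : ∀ (y : Fin (n+1) → ℂ), y l = 0 →
      star y ⬝ᵥ (B *ᵥ y) = star (fun i => y (σ i)) ⬝ᵥ (C *ᵥ fun i => y (σ i)) := by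
    intro y hy0
    simp only [dotProduct, mulVec, Pi.star_apply, hCdef, submatrix_apply]
    rw [Fin.sum_univ_succAbove (fun i => star (y i) * ∑ j, B i j * y j) l]
    simp only [hy0, star_zero, zero_mul, zero_add]
    refine Finset.sum_congr rfl fun i _ => ?_
    congr 1
    rw [Fin.sum_univ_succAbove (fun j => B (σ i) j * y j) l]
    simp [hy0, hσ]
  have hCpd : C.PosDef := by
    refine Matrix.PosDef.of_dotProduct_mulVec_pos (hB.isHermitian.submatrix σ) fun x hx => ?_
    have hy0 : (Fin.insertNth (α := fun _ => ℂ) l 0 x) l = 0 := by simp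
    have hyne : Fin.insertNth (α := fun _ => ℂ) l 0 x ≠ 0 := by
      intro h
      apply hx
      funext i
      have := congrFun h (σ i)
      simpa [hσ, Fin.insertNth_apply_succAbove] using this
    have := hB.dotProduct_mulVec_pos hyne
    rw [key _ hy0] at this
    simpa [hσ, Fin.insertNth_apply_succAbove] using this
  have hCd : IsUnit C.det := (Matrix.isUnit_iff_isUnit_det _).1 hCpd.isUnit
  -- M l l is positive (hence nonzero, self-conjugate)
  have hMll : M l l ≠ 0 := by
    have := hMpd.dotProduct_mulVec_pos (x := Pi.single l 1) (by simp [funext_iff, Pi.single_apply])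
    have h2 : star (Pi.single l (1:ℂ)) ⬝ᵥ (M *ᵥ Pi.single l 1) = M l l := by
      simp [dotProduct, Pi.single_apply, Finset.sum_ite_eq', apply_ite]
    rw [h2] at this
    exact this.ne'
  have hconjM : ∀ i j, (starRingEnd ℂ) (M i j) = M j i := fun i j => hMpd.1.apply j i
  -- the candidate solution for the deleted system
  set c : ℂ := v l / M l l with hcdef
  set w : Fin n → ℂ := fun i => v (σ i) - c * M (σ i) l with hwdef
  have hBv : B *ᵥ v = u := by
    rw [hvdef, mulVec_mulVec, Matrix.mul_nonsing_inv _ hBd, one_mulVec]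
  have hBMcol : ∀ i, ∑ k, B i k * M k l = if i = l then 1 else 0 := by
    intro i
    have : (B * M) i l = (1 : Matrix (Fin (n+1)) (Fin (n+1)) ℂ) i l := by
      rw [hMdef, Matrix.mul_nonsing_inv _ hBd]
    simpa [Matrix.mul_apply, Matrix.one_apply] using this
  have hCw : C *ᵥ w = u ∘ σ := by
    funext i
    have hne : σ i ≠ l := Fin.succAbove_ne l i
    have h1 : ∑ j, B (σ i) (σ j) * v (σ j) = u (σ i) - B (σ i) l * v l := by
      have := Fin.sum_univ_succAbove (fun k => B (σ i) k * v k) l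
      have h2 : ∑ k, B (σ i) k * v k = (B *ᵥ v) (σ i) := by simp [mulVec, dotProduct]
      rw [h2, hBv] at this
      linear_combination -this
    have h3 : ∑ j, B (σ i) (σ j) * M (σ j) l = - (B (σ i) l * M l l) := by
      have := Fin.sum_univ_succAbove (fun k => B (σ i) k * M k l) l
      rw [hBMcol (σ i), if_neg hne] at this
      linear_combination -this
    have hcM : c * M l l = v l := div_mul_cancel₀ _ hMll
    simp only [mulVec, dotProduct, hCdef, submatrix_apply, hwdef, Function.comp_apply]
    calc ∑ j, B (σ i) (σ j) * (v (σ j) - c * M (σ j) l)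
        = (∑ j, B (σ i) (σ j) * v (σ j)) - c * ∑ j, B (σ i) (σ j) * M (σ j) l := by
          rw [Finset.mul_sum, ← Finset.sum_sub_distrib]
          exact Finset.sum_congr rfl fun j _ => by ring
      _ = u (σ i) := by rw [h1, h3]; linear_combination (B (σ i) l) * hcM
  have hCinv : C⁻¹ *ᵥ (u ∘ σ) = w := by
    rw [← hCw, mulVec_mulVec, Matrix.nonsing_inv_mul _ hCd, one_mulVec]
  rw [hCinv]
  -- compute the deleted quadratic form
  have hsum1 : ∑ i, (starRingEnd ℂ) (u (σ i)) * v (σ i)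
      = star u ⬝ᵥ v - (starRingEnd ℂ) (u l) * v l := by
    have := Fin.sum_univ_succAbove (fun k => (starRingEnd ℂ) (u k) * v k) l
    have h2 : ∑ k, (starRingEnd ℂ) (u k) * v k = star u ⬝ᵥ v := by
      simp [dotProduct]
    rw [h2] at this
    linear_combination -this
  have hsum2 : ∑ i, (starRingEnd ℂ) (u (σ i)) * M (σ i) l
      = (starRingEnd ℂ) (v l) - (starRingEnd ℂ) (u l) * M l l := by
    have := Fin.sum_univ_succAbove (fun k => (starRingEnd ℂ) (u k) * M k l) l
    have h2 : ∑ k, (starRingEnd ℂ) (u k) * M k l = (starRingEnd ℂ) (v l) := by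
      rw [hvdef, ← hMdef]
      simp only [mulVec, dotProduct, map_sum]
      exact Finset.sum_congr rfl fun k _ => by rw [_root_.map_mul, hconjM l k]; ring
    rw [h2] at this
    linear_combination -this
  have hdel : star (u ∘ σ) ⬝ᵥ w
      = star u ⬝ᵥ v - v l * (starRingEnd ℂ) (v l) / M l l := by
    have hexp : star (u ∘ σ) ⬝ᵥ w
        = (∑ i, (starRingEnd ℂ) (u (σ i)) * v (σ i))
          - c * ∑ i, (starRingEnd ℂ) (u (σ i)) * M (σ i) l := by
      simp only [dotProduct, hwdef, Pi.star_apply, Function.comp_apply, Finset.mul_sum,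
        ← Finset.sum_sub_distrib]
      exact Finset.sum_congr rfl fun i _ => by simp [RCLike.star_def]; ring
    rw [hexp, hsum1, hsum2, hcdef]
    field_simp
    ring
  rw [hdel]
  have hnorm : ((‖v l‖ ^ 2 : ℝ) : ℂ) = v l * (starRingEnd ℂ) (v l) := by
    rw [Complex.mul_conj]
    norm_cast
    simp [Complex.sq_norm]
  rw [hnorm]
  ring
end
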